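/- arXiv:1402.4761 — 3 statements merged into one kernel-verified Lean document; each statement's English description precedes it below -/
import Mathlib

section
/- For all n, k ≥ 1, the noncommutative partial Bell polynomial satisfies B_{n,k} = Σ over all compositions (j_1,…,j_k) of n (j_i ≥ 1, j_1+⋯+j_k = n) of N(j_1,…,j_k) · d_{j_1} d_{j_2} ⋯ d_{j_k}, where N(j_1,…,j_k) is the number of ordered tuples (P_1,…,P_k) of pairwise disjoint nonempty subsets of {1,…,n} with union {1,…,n}, |P_i| = j_i for each i, and max(P_1) < max(P_2) < ⋯ < max(P_k). In other words, the coefficient of each word d_{j_1}⋯d_{j_k} in B_{n,k} counts the set partitions of {1,…,n} with block sizes j_1,…,j_k whose blocks are ordered by their maxima. -/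
/-
Both sides satisfy the same recursion in `k`. Unfolding `B_{n+1,k+1}` peels off the last factor
`d_{m+1}` with weight `binom(n, m)`. On the combinatorial side, in a partition of `{1, …, n+1}`
with blocks ordered by their maxima, the last block is the one containing `n+1`: there are
`binom(n, m)` choices for its other `m` elements, and the remaining blocks form a partition of the
complement, again ordered by maxima. The count only depends on the size `n - m` of the complement,
since it is invariant under order embeddings.
-/

open Finset

/-- The (noncommutative) partial Bell polynomials. -/
noncomputable def pBell {A : Type*} [Ring A] (d : ℕ → A) : ℕ → ℕ → A
  | 0, 0 => 1
  | _ + 1, 0 => 0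
  | 0, _ + 1 => 0
  | n + 1, k + 1 =>
      ∑ j ∈ Finset.range (n + 1), (n.choose j : A) * (pBell d (n - j) k * d (j + 1))
  termination_by _ k => k

open Function

theorem Finset.max_map_orderEmbedding {α β : Type*} [LinearOrder α] [LinearOrder β] (f : α ↪o β)
    (s : Finset α) :
    (s.map f.toEmbedding).max = WithBot.map f s.max := by
  induction s using Finset.cons_induction with
  | empty => simp
  | cons a s ha ih =>
    simp only [cons_eq_insert, map_insert, max_insert, ih, RelEmbedding.coe_toEmbedding]
    exact (f.withBotMap.monotone.map_max (a := (a : WithBot α)) (b := s.max)).symm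

theorem Fin.strictMono_snoc_iff {n : ℕ} {γ : Type*} [Preorder γ] {f : Fin n → γ} {a : γ} :
    StrictMono (Fin.snoc f a : Fin (n + 1) → γ) ↔ StrictMono f ∧ ∀ i, f i < a := by
  refine ⟨fun h => ⟨fun i i' hii' => ?_, fun i => ?_⟩, fun ⟨hf, ha⟩ => ?_⟩
  · simpa using h (Fin.castSucc_lt_castSucc_iff.2 hii')
  · simpa using h (Fin.castSucc_lt_last i)
  · intro i i' hii'
    induction i using Fin.lastCases with
    | last => exact absurd hii' (Fin.le_last i').not_gt
    | cast i =>
      induction i' using Fin.lastCases with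
      | last => simpa using ha i
      | cast i' => simpa using hf (Fin.castSucc_lt_castSucc_iff.1 hii')

theorem Fin.pairwise_snoc_iff {n : ℕ} {γ : Type*} {r : γ → γ → Prop} [Std.Symm r] {f : Fin n → γ}
    {a : γ} :
    Pairwise (r on (Fin.snoc f a : Fin (n + 1) → γ)) ↔ Pairwise (r on f) ∧ ∀ i, r (f i) a := by
  refine ⟨fun h => ⟨fun i i' hii' => ?_, fun i => ?_⟩, fun ⟨hf, ha⟩ => ?_⟩
  · simpa [onFun] using h (Fin.castSucc_injective _ |>.ne hii')
  · simpa [onFun] using h (Fin.castSucc_lt_last i).ne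
  · intro i i' hii'
    induction i using Fin.lastCases with
    | last =>
      induction i' using Fin.lastCases with
      | last => exact absurd rfl hii'
      | cast i' => simpa [onFun] using Std.Symm.symm _ _ (ha i')
    | cast i =>
      induction i' using Fin.lastCases with
      | last => simpa [onFun] using ha i
      | cast i' => simpa [onFun] using hf (fun h => hii' (congrArg _ h))

theorem card_finset_mem_and_card_eq_succ {γ : Type*} [Fintype γ] [DecidableEq γ] (a : γ) (m : ℕ) :
    Nat.card {s : Finset γ // a ∈ s ∧ #s = m + 1} = (Fintype.card γ - 1).choose m := by
  rw [Nat.card_eq_fintype_card, Fintype.card_subtype, ← card_univ,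
    ← card_erase_of_mem (mem_univ a), ← card_powersetCard]
  have hnotMem {t : Finset γ} (ht : t ⊆ univ.erase a) : a ∉ t := fun h => by simpa using ht h
  refine card_nbij' (·.erase a) (insert a) ?_ ?_ ?_ ?_ <;> intro s hs <;>
    simp only [coe_filter, mem_coe, mem_powersetCard, Set.mem_ofPred_eq, mem_univ, true_and] at hs ⊢
  · exact ⟨erase_subset_erase a (subset_univ s),
      by rw [card_erase_of_mem hs.1, hs.2, Nat.add_sub_cancel]⟩
  · exact ⟨mem_insert_self a s, by rw [card_insert_of_notMem (hnotMem hs.1), hs.2]⟩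
  · exact insert_erase hs.1
  · exact erase_insert (hnotMem hs.1)

section MaxOrderedPartition

variable {α β : Type*} [LinearOrder α] [LinearOrder β] {k : ℕ}

/-- Partitions of a subset `T` rather than of the whole type, so that removing the last block
leaves a partition of the same kind, of `T \ P (Fin.last _)`. -/
def IsMaxOrderedPartition (T : Finset α) (j : Fin k → ℕ) (P : Fin k → Finset α) : Prop :=
  (∀ i, P i ⊆ T) ∧ (∀ i, #(P i) = j i) ∧ Pairwise (Disjoint on P) ∧ (∀ x ∈ T, ∃ i, x ∈ P i) ∧
    StrictMono (Finset.max ∘ P)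

theorem isMaxOrderedPartition_map_iff (f : α ↪o β) {T : Finset α} {j : Fin k → ℕ}
    {P : Fin k → Finset α} :
    IsMaxOrderedPartition (T.map f.toEmbedding) j (fun i => (P i).map f.toEmbedding) ↔
      IsMaxOrderedPartition T j P := by
  have hmax : StrictMono (Finset.max ∘ fun i => (P i).map f.toEmbedding) ↔
      StrictMono (Finset.max ∘ P) := by
    simp only [StrictMono, comp_apply, Finset.max_map_orderEmbedding]
    exact forall₂_congr fun _ _ => imp_congr_right fun _ => f.withBotMap.lt_iff_lt
  simp only [IsMaxOrderedPartition, map_subset_map, card_map, Pairwise, disjoint_map,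
    forall_mem_map, mem_map', hmax]

theorem card_isMaxOrderedPartition_map (f : α ↪o β) (T : Finset α) (j : Fin k → ℕ) :
    Nat.card {Q : Fin k → Finset β // IsMaxOrderedPartition (T.map f.toEmbedding) j Q} =
      Nat.card {P : Fin k → Finset α // IsMaxOrderedPartition T j P} := by
  refine (Nat.card_eq_of_bijective (fun P => ⟨fun i => (P.1 i).map f.toEmbedding,
    isMaxOrderedPartition_map_iff f |>.2 P.2⟩) ⟨fun P P' h => ?_, fun Q => ?_⟩).symm
  · exact Subtype.ext <| funext fun i => map_injective _ (congrFun (congrArg Subtype.val h) i)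
  · choose P hPT hP using fun i => subset_map_iff.1 (Q.2.1 i)
    refine ⟨⟨P, (isMaxOrderedPartition_map_iff f).1 ?_⟩, Subtype.ext (funext hP).symm⟩
    simpa only [← hP] using Q.2

theorem IsMaxOrderedPartition.top_mem_last [OrderTop α] {T : Finset α} {j : Fin (k + 1) → ℕ}
    {P : Fin (k + 1) → Finset α} (hP : IsMaxOrderedPartition T j P) (hT : ⊤ ∈ T) :
    ⊤ ∈ P (Fin.last k) := by
  obtain ⟨i, hi⟩ := hP.2.2.2.1 ⊤ hT
  obtain rfl | hlt := (Fin.le_last i).eq_or_lt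
  · exact hi
  · exact (not_top_lt ((Finset.max_eq_top.2 hi).symm.trans_lt (hP.2.2.2.2 hlt))).elim

theorem isMaxOrderedPartition_snoc_iff [OrderTop α] {T s : Finset α} (hs : ⊤ ∈ s) (hsT : s ⊆ T)
    {j : Fin k → ℕ} {m : ℕ} {Q : Fin k → Finset α} :
    IsMaxOrderedPartition T (Fin.snoc j m) (Fin.snoc Q s) ↔
      #s = m ∧ IsMaxOrderedPartition (T \ s) j Q := by
  have hmax : ∀ i, (Q i).max < s.max ↔ ⊤ ∉ Q i := fun i => by
    rw [Finset.max_eq_top.2 hs, lt_top_iff_ne_top, Ne, Finset.max_eq_top]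
  simp only [IsMaxOrderedPartition, Fin.forall_fin_succ', Fin.exists_fin_succ', Fin.snoc_castSucc,
    Fin.snoc_last, Fin.pairwise_snoc_iff, Fin.comp_snoc, Fin.strictMono_snoc_iff, comp_apply, hmax,
    subset_sdiff, mem_sdiff]
  constructor
  · rintro ⟨⟨hQT, -⟩, ⟨hcard, hm⟩, ⟨hdisj, hQs⟩, hcover, hmono, -⟩
    exact ⟨hm, fun i => ⟨hQT i, hQs i⟩, hcard, hdisj,
      fun x ⟨hxT, hxs⟩ => (hcover x hxT).resolve_right hxs, hmono⟩
  · rintro ⟨hm, hQ, hcard, hdisj, hcover, hmono⟩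
    exact ⟨⟨fun i => (hQ i).1, hsT⟩, ⟨hcard, hm⟩, ⟨hdisj, fun i => (hQ i).2⟩,
      fun x hxT => or_iff_not_imp_right.2 fun hxs => hcover x ⟨hxT, hxs⟩, hmono,
      fun i hi => disjoint_left.1 (hQ i).2 hi hs⟩

/-- Partitions of a subset `T` rather than of the whole type, so that removing the last block
leaves a partition of the same kind, of `T \ P (Fin.last _)`. -/
def IsMaxOrderedPartition.snocEquiv [Fintype α] [OrderTop α] (j : Fin k → ℕ) (m : ℕ) :
    {P : Fin (k + 1) → Finset α // IsMaxOrderedPartition univ (Fin.snoc j m) P} ≃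
      Σ s : {s : Finset α // ⊤ ∈ s ∧ #s = m},
        {Q : Fin k → Finset α // IsMaxOrderedPartition (univ \ s.1) j Q} where
  toFun P :=
    have hs := P.2.top_mem_last (mem_univ _)
    have hP := (isMaxOrderedPartition_snoc_iff hs (subset_univ _)).1
      (by rw [Fin.snoc_init_self]; exact P.2)
    ⟨⟨P.1 (Fin.last k), hs, hP.1⟩, ⟨Fin.init P.1, hP.2⟩⟩
  invFun sQ := ⟨Fin.snoc sQ.2.1 sQ.1.1,
    (isMaxOrderedPartition_snoc_iff sQ.1.2.1 (subset_univ _)).2 ⟨sQ.1.2.2, sQ.2.2⟩⟩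
  left_inv P := Subtype.ext (Fin.snoc_init_self P.1)
  right_inv sQ := Sigma.subtype_ext (Subtype.ext (by simp)) (by simp)

theorem card_isMaxOrderedPartition_snoc (n m : ℕ) (j : Fin k → ℕ) :
    Nat.card {P : Fin (k + 1) → Finset (Fin (n + 1)) //
        IsMaxOrderedPartition univ (Fin.snoc j (m + 1)) P} =
      n.choose m *
        Nat.card {Q : Fin k → Finset (Fin (n - m)) // IsMaxOrderedPartition univ j Q} := by
  have hfiber (s : {s : Finset (Fin (n + 1)) // ⊤ ∈ s ∧ #s = m + 1}) :
      Nat.card {Q : Fin k → Finset (Fin (n + 1)) // IsMaxOrderedPartition (univ \ s.1) j Q} =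
        Nat.card {Q : Fin k → Finset (Fin (n - m)) // IsMaxOrderedPartition univ j Q} := by
    have hcard : #(univ \ s.1) = n - m := by
      rw [card_univ_sdiff, s.2.2, Fintype.card_fin]; omega
    rw [← map_orderEmbOfFin_univ _ hcard, card_isMaxOrderedPartition_map]
  rw [Nat.card_congr (IsMaxOrderedPartition.snocEquiv j (m + 1)), Nat.card_sigma,
    sum_congr rfl fun s _ => hfiber s, sum_const, card_univ, ← Nat.card_eq_fintype_card,
    card_finset_mem_and_card_eq_succ, Fintype.card_fin, smul_eq_mul, Nat.add_sub_cancel]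

end MaxOrderedPartition

theorem List.prod_ofFn_apply_snoc {β M : Type*} [Monoid M] {k : ℕ} (f : β → M) (j : Fin k → β)
    (a : β) :
    (List.ofFn fun i => f (Fin.snoc (α := fun _ => β) j a i)).prod =
      (List.ofFn fun i => f (j i)).prod * f a := by
  rw [List.ofFn_succ', List.prod_concat]
  simp only [Fin.snoc_castSucc, Fin.snoc_last]

def compositionTuples (k n : ℕ) : Finset (Fin k → ℕ) :=
  (Nat.antidiagonalTuple k n).filter fun j => ∀ i, 1 ≤ j i

theorem snoc_mem_compositionTuples_iff {k n m : ℕ} {j : Fin k → ℕ} :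
    (Fin.snoc j (m + 1) : Fin (k + 1) → ℕ) ∈ compositionTuples (k + 1) (n + 1) ↔
      m ≤ n ∧ j ∈ compositionTuples k (n - m) := by
  simp only [compositionTuples, mem_filter, Nat.mem_antidiagonalTuple, Fin.sum_univ_castSucc,
    Fin.snoc_castSucc, Fin.snoc_last, Fin.forall_fin_succ', le_add_iff_nonneg_left, zero_le,
    and_true]
  constructor
  · rintro ⟨hsum, hpos⟩
    exact ⟨by omega, by omega, hpos⟩
  · rintro ⟨hmn, hsum, hpos⟩
    exact ⟨by omega, hpos⟩

theorem snoc_init_pred_last_of_mem_compositionTuples {k n : ℕ} {j : Fin (k + 1) → ℕ}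
    (hj : j ∈ compositionTuples (k + 1) n) :
    (Fin.snoc (Fin.init j) (j (Fin.last k) - 1 + 1) : Fin (k + 1) → ℕ) = j := by
  rw [Nat.sub_add_cancel ((mem_filter.1 hj).2 _), Fin.snoc_init_self]

theorem compositionTuples_succ_zero (k : ℕ) : compositionTuples (k + 1) 0 = ∅ := by
  rw [compositionTuples, Nat.antidiagonalTuple_zero_right, filter_singleton,
    if_neg fun h => by simpa using h 0]

theorem sum_compositionTuples_succ {M : Type*} [AddCommMonoid M] (k n : ℕ)
    (f : (Fin (k + 1) → ℕ) → M) :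
    ∑ j ∈ compositionTuples (k + 1) (n + 1), f j =
      ∑ m ∈ range (n + 1), ∑ j ∈ compositionTuples k (n - m), f (Fin.snoc j (m + 1)) := by
  rw [sum_sigma']
  refine (sum_nbij' (fun p : Σ _ : ℕ, Fin k → ℕ => Fin.snoc p.2 (p.1 + 1))
    (fun j : Fin (k + 1) → ℕ => ⟨j (Fin.last k) - 1, Fin.init j⟩) (fun p hp => ?_)
    (fun j hj => ?_) (fun p _ => ?_) (fun j hj => ?_) (fun _ _ => rfl)).symm
  · simp only [mem_sigma, mem_range] at hp
    exact snoc_mem_compositionTuples_iff.2 ⟨Nat.lt_succ_iff.1 hp.1, hp.2⟩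
  · rw [← snoc_init_pred_last_of_mem_compositionTuples hj,
      snoc_mem_compositionTuples_iff] at hj
    simpa [Nat.lt_succ_iff] using hj
  · simp
  · exact snoc_init_pred_last_of_mem_compositionTuples hj

theorem pBell_eq_sum_compositionTuples {A : Type*} [Ring A] (d : ℕ → A) (k n : ℕ) :
    pBell d n k = ∑ j ∈ compositionTuples k n,
      Nat.card {P : Fin k → Finset (Fin n) // IsMaxOrderedPartition univ j P} •
        (List.ofFn fun i => d (j i)).prod := by
  induction k generalizing n with
  | zero =>
    cases n with
    | zero => simp [pBell, compositionTuples, IsMaxOrderedPartition, Subsingleton.strictMono _]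
    | succ n => simp [pBell, compositionTuples]
  | succ k ih =>
    cases n with
    | zero => rw [compositionTuples_succ_zero, sum_empty, pBell]
    | succ n =>
      rw [pBell, sum_compositionTuples_succ]
      refine sum_congr rfl fun m _ => ?_
      rw [ih, sum_mul, mul_sum]
      refine sum_congr rfl fun j _ => ?_
      rw [card_isMaxOrderedPartition_snoc, List.prod_ofFn_apply_snoc, smul_mul_assoc, mul_smul,
        nsmul_eq_mul (n.choose m)]

theorem stmt12_general (n k : ℕ) :
    pBell (fun i => FreeAlgebra.ι ℚ i) n k =
      ∑ j ∈ (Finset.Nat.antidiagonalTuple k n).filter (fun j => ∀ i : Fin k, 1 ≤ j i),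
        (Nat.card {P : Fin k → Finset (Fin n) //
            (∀ i : Fin k, (P i).card = j i) ∧
            (∀ i i' : Fin k, i ≠ i' → Disjoint (P i) (P i')) ∧
            (∀ x : Fin n, ∃ i : Fin k, x ∈ P i) ∧
            (∀ i i' : Fin k, i < i' → (P i).max < (P i').max)}) •
          (List.ofFn fun i : Fin k => FreeAlgebra.ι ℚ (j i)).prod := by
  rw [pBell_eq_sum_compositionTuples]
  simp only [compositionTuples, IsMaxOrderedPartition, subset_univ, implies_true, mem_univ,
    forall_const, true_and]
  rfl

/-- The coefficient of each word `d_{j₁} ⋯ d_{j_k}` in the noncommutative partial Bell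
polynomial `B_{n,k}` counts the set partitions of `{1,…,n}` with block sizes `j₁, …, j_k`
whose blocks are ordered by their maxima. -/
theorem stmt12 (n k : ℕ) (hn : 1 ≤ n) (hk : 1 ≤ k) :
    pBell (fun i => FreeAlgebra.ι ℚ i) n k =
      ∑ j ∈ (Finset.Nat.antidiagonalTuple k n).filter (fun j => ∀ i : Fin k, 1 ≤ j i),
        (Nat.card {P : Fin k → Finset (Fin n) //
            (∀ i : Fin k, (P i).card = j i) ∧
            (∀ i i' : Fin k, i ≠ i' → Disjoint (P i) (P i')) ∧
            (∀ x : Fin n, ∃ i : Fin k, x ∈ P i) ∧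
            (∀ i i' : Fin k, i < i' → (P i).max < (P i').max)}) •
          (List.ofFn fun i : Fin k => FreeAlgebra.ι ℚ (j i)).prod :=
  stmt12_general n k
end

section
/- Let n ≥ 1 and let f, g : ℝ → ℝ be n-times continuously differentiable functions. Then for every x ∈ ℝ, the n-th derivative of the composite satisfies (f ∘ g)^{(n)}(x) = Σ_{k=0}^{n} f^{(k)}(g(x)) · B_{n,k}(g'(x), g''(x), …, g^{(n−k+1)}(x)), where B_{n,k}(g'(x), g''(x), …) denotes the commutative partial Bell polynomial evaluated at d_i := g^{(i)}(x) (the i-th derivative of g at x). -/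
open Finset MvPolynomial

section pBell

variable {A : Type*} [Ring A] (d : ℕ → A)

@[simp]
lemma pBell_zero_zero : pBell d 0 0 = 1 := by
  rw [pBell]

@[simp]
lemma pBell_zero_succ (k : ℕ) : pBell d 0 (k + 1) = 0 := by
  rw [pBell]

@[simp]
lemma pBell_succ_zero (n : ℕ) : pBell d (n + 1) 0 = 0 := by
  rw [pBell]

lemma pBell_succ_succ (n k : ℕ) :
    pBell d (n + 1) (k + 1) =
      ∑ j ∈ range (n + 1), (n.choose j : A) * (pBell d (n - j) k * d (j + 1)) := by
  rw [pBell]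

lemma pBell_eq_zero_of_lt {n k : ℕ} (h : n < k) : pBell d n k = 0 := by
  induction k generalizing n with
  | zero => omega
  | succ k ih =>
    cases n with
    | zero => exact pBell_zero_succ d k
    | succ n =>
      rw [pBell_succ_succ]
      exact sum_eq_zero fun j _ => by rw [ih (by omega), zero_mul, mul_zero]

lemma sum_range_mul_pBell_of_le {n m : ℕ} (h : n ≤ m) (c : ℕ → A) :
    ∑ k ∈ range (m + 1), c k * pBell d n k = ∑ k ∈ range (n + 1), c k * pBell d n k :=
  (sum_subset (range_subset_range.mpr (by omega)) fun k _ hk => by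
    rw [pBell_eq_zero_of_lt d (by simpa using hk), mul_zero]).symm

lemma map_pBell {B F : Type*} [Ring B] [FunLike F A B] [RingHomClass F A B] (φ : F) (n k : ℕ) :
    φ (pBell d n k) = pBell (fun i => φ (d i)) n k := by
  induction k generalizing n with
  | zero => cases n <;> simp
  | succ k ih =>
    cases n with
    | zero => simp
    | succ n => simp only [pBell_succ_succ, map_sum, map_mul, map_natCast, ih]

end pBell

lemma iteratedDeriv_comp_eq_sum_pBell {𝕜 : Type*} [NontriviallyNormedField 𝕜] (n : ℕ)
    {f g : 𝕜 → 𝕜} (hf : ContDiff 𝕜 n f) (hg : ContDiff 𝕜 n g) (x : 𝕜) :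
    iteratedDeriv n (f ∘ g) x =
      ∑ k ∈ range (n + 1), iteratedDeriv k f (g x) * pBell (fun i => iteratedDeriv i g x) n k := by
  induction n using Nat.strong_induction_on generalizing f with
  | _ n ih =>
  set D := fun i => iteratedDeriv i g x
  cases n with
  | zero => simp
  | succ n =>
    rw [Nat.cast_succ] at hf hg
    obtain ⟨hf₁, -, hf'⟩ := contDiff_succ_iff_deriv.mp hf
    obtain ⟨hg₁, -, hg'⟩ := contDiff_succ_iff_deriv.mp hg
    replace hg : ContDiff 𝕜 n g := hg.of_succ
    have hchain : deriv (f ∘ g) = deriv g * (deriv f ∘ g) := by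
      ext y
      rw [deriv_comp y (hf₁ _) (hg₁ y), mul_comm]
      rfl
    have hderiv_comp : ∀ j ≤ n, iteratedDeriv j (deriv f ∘ g) x =
        ∑ k ∈ range (n + 1), iteratedDeriv (k + 1) f (g x) * pBell D j k := fun j hj => by
      rw [ih j (by omega) (hf'.of_le (by exact_mod_cast hj)) (hg.of_le (by exact_mod_cast hj)),
        ← sum_range_mul_pBell_of_le D hj]
      simp only [iteratedDeriv_succ']
    calc iteratedDeriv (n + 1) (f ∘ g) x
        = ∑ j ∈ range (n + 1), n.choose j * D (j + 1) * iteratedDeriv (n - j) (deriv f ∘ g) x := by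
          rw [iteratedDeriv_succ', hchain,
            iteratedDeriv_mul hg'.contDiffAt (hf'.comp hg).contDiffAt]
          simp only [D, iteratedDeriv_succ']
      _ = ∑ k ∈ range (n + 1), iteratedDeriv (k + 1) f (g x) * pBell D (n + 1) (k + 1) := by
          simp only [hderiv_comp _ (Nat.sub_le n _), pBell_succ_succ, mul_sum]
          rw [sum_comm]
          refine sum_congr rfl fun k _ => sum_congr rfl fun j _ => by ring
      _ = ∑ k ∈ range (n + 1 + 1), iteratedDeriv k f (g x) * pBell D (n + 1) k := by
          simp [sum_range_succ' _ (n + 1)]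

theorem stmt14_general (n : ℕ) (f g : ℝ → ℝ)
    (hf : ContDiff ℝ n f) (hg : ContDiff ℝ n g) (x : ℝ) :
    iteratedDeriv n (f ∘ g) x =
      ∑ k ∈ Finset.range (n + 1), iteratedDeriv k f (g x) *
        MvPolynomial.aeval (fun i => iteratedDeriv i g x)
          (pBell (fun i => (X i : MvPolynomial ℕ ℚ)) n k) := by
  simp only [map_pBell, aeval_X]
  exact iteratedDeriv_comp_eq_sum_pBell n hf hg x

/-- The Faà di Bruno formula: for `n`-times continuously differentiable `f, g : ℝ → ℝ`,
`(f ∘ g)⁽ⁿ⁾(x) = ∑_{k=0}^{n} f⁽ᵏ⁾(g x) · B_{n,k}(g'(x), g''(x), …)`, where `B_{n,k}` is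
the commutative partial Bell polynomial evaluated at `d_i := g⁽ⁱ⁾(x)`. -/
theorem stmt14 (n : ℕ) (hn : 1 ≤ n) (f g : ℝ → ℝ)
    (hf : ContDiff ℝ n f) (hg : ContDiff ℝ n g) (x : ℝ) :
    iteratedDeriv n (f ∘ g) x =
      ∑ k ∈ Finset.range (n + 1), iteratedDeriv k f (g x) *
        MvPolynomial.aeval (fun i => iteratedDeriv i g x)
          (pBell (fun i => (X i : MvPolynomial ℕ ℚ)) n k) :=
  stmt14_general n f g hf hg x
end

section
/- Let A be a (not necessarily commutative) ring and let W : ℕ × ℕ → A be any family of elements with W(n,n) = 1 for all n ≥ 0. Define S_0 := 1 and, for n ≥ 1, S_n := P_n(a), the (1,n) quasideterminant polynomial applied to the entries a_{ij} := −W(n−i+1, n−j) for 1 ≤ i ≤ j ≤ n. Then for every n ≥ 1, Σ_{k=0}^{n} W(n,k) · S_k = 0. (Applied to the rank polynomials W_{n,k} of a noncommutative uniform family of posets, this says the antipode of the associated incidence Hopf algebra is S(x_n) = |M_n|_{1n}, the quasideterminant of the matrix M_n with entries W_{n−i+1,n−j}.) -/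
/-!
Every chain of `P_{n+1}(a)` begins with a factor `a 1 j` (or is the single factor `a 1 (n+1)`),
and the rest of the chain is a chain of the same polynomial `P_{n+1-j}` for the entries shifted
by `j`. With `a i j = -W (n-i+1) (n-j)` the shifted polynomial is exactly `S (n-j)`, which gives
the recursion `S n = -∑_{k<n} W n k · S k`; since `W n n = 1` this is the claim.
-/

open Finset

/-- `chainProd a n i [j₁, …, jₖ] = a i j₁ * a (j₁+1) j₂ * ⋯ * a (jₖ+1) n`. -/
noncomputable def chainProd {A : Type*} [Ring A] (a : ℕ → ℕ → A) (n : ℕ) : ℕ → List ℕ → A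
  | i, [] => a i n
  | i, j :: l => a i j * chainProd a n (j + 1) l

/-- The `(1,n)` quasideterminant polynomial `P_n(a)`, with `P_0 = 1`. -/
noncomputable def quasiP {A : Type*} [Ring A] (a : ℕ → ℕ → A) : ℕ → A
  | 0 => 1
  | n + 1 => ∑ s ∈ (Finset.Icc 1 n).powerset, chainProd a (n + 1) 1 (s.sort (· ≤ ·))

section

variable {A : Type*} [Ring A]

noncomputable def chainSum (a : ℕ → ℕ → A) (N i : ℕ) (s : Finset ℕ) : A :=
  ∑ t ∈ s.powerset, chainProd a N i (t.sort (· ≤ ·))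

theorem quasiP_succ_eq_chainSum (a : ℕ → ℕ → A) (n : ℕ) :
    quasiP a (n + 1) = chainSum a (n + 1) 1 (Icc 1 n) :=
  rfl

theorem chainSum_empty (a : ℕ → ℕ → A) (N i : ℕ) : chainSum a N i ∅ = a i N := by
  simp [chainSum, chainProd]

theorem chainSum_insert_of_lt (a : ℕ → ℕ → A) (N i : ℕ) {j : ℕ} {s : Finset ℕ}
    (hs : ∀ x ∈ s, j < x) :
    chainSum a N i (insert j s) = chainSum a N i s + a i j * chainSum a N (j + 1) s := by
  have hj : j ∉ s := fun hj => lt_irrefl j (hs j hj)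
  rw [chainSum, sum_powerset_insert hj, chainSum, chainSum, mul_sum]
  congr 1
  refine sum_congr rfl fun t ht => ?_
  have ht : t ⊆ s := mem_powerset.1 ht
  rw [sort_insert _ (fun x hx => (hs x (ht hx)).le) (fun hjt => hj (ht hjt)), chainProd]

theorem chainSum_eq_add_sum (a : ℕ → ℕ → A) (N : ℕ) (s : Finset ℕ) (i : ℕ) :
    chainSum a N i s = a i N + ∑ j ∈ s, a i j * chainSum a N (j + 1) (s.filter (j < ·)) := by
  induction s using Finset.induction_on_min generalizing i with
  | empty => rw [chainSum_empty, sum_empty, add_zero]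
  | insert j s hs ih =>
    have hj : j ∉ s := fun hj => lt_irrefl j (hs j hj)
    have hfilter : ∀ k ∈ s, (insert j s).filter (k < ·) = s.filter (k < ·) := fun k hk => by
      rw [filter_insert, if_neg (hs k hk).asymm]
    rw [chainSum_insert_of_lt a N i hs, sum_insert hj, sum_congr rfl fun k hk => by
      rw [hfilter k hk], ih, filter_insert, if_neg (lt_irrefl j), filter_true_of_mem hs]
    abel

theorem chainProd_map_add (a : ℕ → ℕ → A) (N c : ℕ) :
    ∀ (l : List ℕ) (i : ℕ), chainProd a (N + c) (i + c) (l.map (· + c))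
      = chainProd (fun p q => a (p + c) (q + c)) N i l
  | [], _ => rfl
  | j :: l, _ => by
    rw [List.map_cons, chainProd, chainProd, ← chainProd_map_add a N c l, Nat.add_right_comm]

theorem chainSum_map_add (a : ℕ → ℕ → A) (N i c : ℕ) (s : Finset ℕ) :
    chainSum a (N + c) (i + c) (s.map (addRightEmbedding c))
      = chainSum (fun p q => a (p + c) (q + c)) N i s := by
  have hpowerset : (s.map (addRightEmbedding c)).powerset
      = s.powerset.map (mapEmbedding (addRightEmbedding c)).toEmbedding := by
    ext t
    simp only [map_eq_image, powerset_image, mem_image, RelEmbedding.coe_toEmbedding,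
      mapEmbedding_apply]
  rw [chainSum, hpowerset, sum_map, chainSum]
  refine sum_congr rfl fun t _ => ?_
  rw [RelEmbedding.coe_toEmbedding, mapEmbedding_apply,
    ← (add_left_strictMono (a := c)).strictMonoOn t |>.map_finsetSort]
  exact chainProd_map_add a N c _ i

theorem quasiP_succ (a : ℕ → ℕ → A) (n : ℕ) :
    quasiP a (n + 1) = a 1 (n + 1) +
      ∑ j ∈ Icc 1 n, a 1 j * quasiP (fun p q => a (p + j) (q + j)) (n + 1 - j) := by
  rw [quasiP_succ_eq_chainSum, chainSum_eq_add_sum]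
  congr 1
  refine sum_congr rfl fun j hj => ?_
  obtain ⟨m, rfl⟩ : ∃ m, n = m + j := ⟨n - j, by grind⟩
  have hfilter : (Icc 1 (m + j)).filter (j < ·) = (Icc 1 m).map (addRightEmbedding j) := by
    ext x
    simp only [mem_filter, mem_Icc, mem_map, addRightEmbedding_apply]
    constructor
    · intro hx; exact ⟨x - j, by omega, by omega⟩
    · rintro ⟨y, hy, rfl⟩; omega
  rw [hfilter, show m + j + 1 - j = m + 1 by omega, quasiP_succ_eq_chainSum,
    ← chainSum_map_add, Nat.add_right_comm, Nat.add_comm j 1]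

end

theorem eq_neg_sum_mul_of_eq_quasiP {A : Type*} [Ring A] (W : ℕ → ℕ → A) (S : ℕ → A)
    (hS0 : S 0 = 1) (hS : ∀ n, 1 ≤ n → S n = quasiP (fun i j => -W (n - i + 1) (n - j)) n)
    {n : ℕ} (hn : 1 ≤ n) :
    S n = -∑ k ∈ range n, W n k * S k := by
  obtain ⟨m, rfl⟩ : ∃ m, n = m + 1 := ⟨n - 1, by omega⟩
  have hterm : ∀ j ∈ Icc 1 m,
      -W (m + 1 - 1 + 1) (m + 1 - j) *
        quasiP (fun p q => -W (m + 1 - (p + j) + 1) (m + 1 - (q + j))) (m + 1 - j)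
        = -(W (m + 1) (m + 1 - j) * S (m + 1 - j)) := by
    intro j hj
    have hjm : j ≤ m := (mem_Icc.1 hj).2
    rw [hS (m + 1 - j) (by omega), neg_mul, Nat.add_sub_cancel]
    congr 4
    funext p q
    rw [Nat.sub_sub, Nat.sub_sub, Nat.add_comm j p, Nat.add_comm j q]
  rw [hS (m + 1) hn, quasiP_succ, sum_congr rfl hterm, sum_range_eq_add_Ico _ hn, hS0,
    mul_one, ← Ico_add_one_right_eq_Icc, sum_neg_distrib, neg_add,
    sum_Ico_reflect (fun k => W (m + 1) k * S k) 1 (Nat.le_succ _), Nat.add_sub_cancel_left,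
    Nat.add_sub_cancel, Nat.add_sub_cancel, Nat.sub_self]

/-- Quasideterminantal antipode formula for noncommutative incidence Hopf algebras:
if `W n n = 1`, `S 0 = 1`, and `S n` is the `(1,n)` quasideterminant polynomial with
entries `a i j = -W (n-i+1) (n-j)`, then `∑_{k=0}^{n} W n k · S k = 0` for every `n ≥ 1`. -/
theorem stmt18 {A : Type*} [Ring A] (W : ℕ → ℕ → A) (hW : ∀ n, W n n = 1)
    (S : ℕ → A) (hS0 : S 0 = 1)
    (hS : ∀ n, 1 ≤ n → S n = quasiP (fun i j => -W (n - i + 1) (n - j)) n) :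
    ∀ n, 1 ≤ n → ∑ k ∈ Finset.range (n + 1), W n k * S k = 0 := by
  intro n hn
  rw [sum_range_succ, hW n, one_mul, eq_neg_sum_mul_of_eq_quasiP W S hS0 hS hn, add_neg_cancel]
end
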